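/- arXiv:1512.08006 — 3 statements merged into one kernel-verified Lean document; each statement's English description precedes it below -/
import Mathlib

section
/- Let h, κ, k, ρ₁ > 0 be real numbers and set a₁ = kκ²/h² and a₂ = kκ²/(2h). Let φ, ψ : ℤ × ℤ → ℝ (first argument the spatial index, second the time index) and u : ℤ → ℝ. Fix i, n ∈ ℤ and assume: (i) (1/12)u(i+1) + (5/6)u(i) + (1/12)u(i−1) = φ(i+1,n) − 2φ(i,n) + φ(i−1,n); (ii) for every j ∈ {i−1, i, i+1}: ρ₁·(φ(j,n+1) − 2φ(j,n) + φ(j,n−1))/κ² − (k/h²)·u(j) − (k/(2h))·(ψ(j+1,n) − ψ(j−1,n)) = 0. Then ρ₁·((1/12)φ(i+1,n+1) + (5/6)φ(i,n+1) + (1/12)φ(i−1,n+1)) − (1/6)(ρ₁+6a₁)·φ(i+1,n) − (1/3)(5ρ₁−6a₁)·φ(i,n) − (1/6)(ρ₁+6a₁)·φ(i−1,n) + ρ₁·((1/12)φ(i+1,n−1) + (5/6)φ(i,n−1) + (1/12)φ(i−1,n−1)) − a₂·((1/12)ψ(i+2,n) + (5/6)ψ(i+1,n) − (5/6)ψ(i−1,n)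 − (1/12)ψ(i−2,n)) = 0. -/
/-- Derivation of the explicit fourth-order scheme for the first Timoshenko equation
`ρ₁ φ_tt − k (φ_x + ψ)_x = 0`: multiplying the compact finite-difference discretization
by `κ²[1 + (1/12)δₓ²]` yields the stated explicit relation. -/
theorem timoshenko_first_equation_scheme
    (h κ k ρ₁ : ℝ) (hh : 0 < h) (hκ : 0 < κ) (hk : 0 < k) (hρ₁ : 0 < ρ₁)
    (a₁ a₂ : ℝ) (ha₁ : a₁ = k * κ ^ 2 / h ^ 2) (ha₂ : a₂ = k * κ ^ 2 / (2 * h))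
    (φ ψ : ℤ → ℤ → ℝ) (u : ℤ → ℝ) (i n : ℤ)
    (hu : (1 / 12) * u (i + 1) + (5 / 6) * u i + (1 / 12) * u (i - 1)
        = φ (i + 1) n - 2 * φ i n + φ (i - 1) n)
    (hscheme : ∀ j ∈ ({i - 1, i, i + 1} : Set ℤ),
      ρ₁ * (φ j (n + 1) - 2 * φ j n + φ j (n - 1)) / κ ^ 2
        - (k / h ^ 2) * u j
        - (k / (2 * h)) * (ψ (j + 1) n - ψ (j - 1) n) = 0) :
    ρ₁ * ((1 / 12) * φ (i + 1) (n + 1) + (5 / 6) * φ i (n + 1)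
        + (1 / 12) * φ (i - 1) (n + 1))
      - (1 / 6) * (ρ₁ + 6 * a₁) * φ (i + 1) n
      - (1 / 3) * (5 * ρ₁ - 6 * a₁) * φ i n
      - (1 / 6) * (ρ₁ + 6 * a₁) * φ (i - 1) n
      + ρ₁ * ((1 / 12) * φ (i + 1) (n - 1) + (5 / 6) * φ i (n - 1)
        + (1 / 12) * φ (i - 1) (n - 1))
      - a₂ * ((1 / 12) * ψ (i + 2) n + (5 / 6) * ψ (i + 1) n
        - (5 / 6) * ψ (i - 1) n - (1 / 12) * ψ (i - 2) n) = 0 := by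
  have h1 := hscheme (i - 1) (by simp)
  have h2 := hscheme i (by simp)
  have h3 := hscheme (i + 1) (by simp)
  have e1 : i - 1 + 1 = i := by ring
  have e2 : i - 1 - 1 = i - 2 := by ring
  have e3 : i + 1 + 1 = i + 2 := by ring
  have e4 : i + 1 - 1 = i := by ring
  rw [e1, e2] at h1
  rw [e3, e4] at h3
  have hκ2 : κ ^ 2 ≠ 0 := by positivity
  have hh2 : h ^ 2 ≠ 0 := by positivity
  have hh0 : h ≠ 0 := ne_of_gt hh
  have H1 : ρ₁ * (φ (i - 1) (n + 1) - 2 * φ (i - 1) n + φ (i - 1) (n - 1))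
      = a₁ * u (i - 1) + a₂ * (ψ i n - ψ (i - 2) n) := by
    rw [ha₁, ha₂]; field_simp at h1 ⊢; linear_combination h1
  have H2 : ρ₁ * (φ i (n + 1) - 2 * φ i n + φ i (n - 1))
      = a₁ * u i + a₂ * (ψ (i + 1) n - ψ (i - 1) n) := by
    rw [ha₁, ha₂]; field_simp at h2 ⊢; linear_combination h2
  have H3 : ρ₁ * (φ (i + 1) (n + 1) - 2 * φ (i + 1) n + φ (i + 1) (n - 1))
      = a₁ * u (i + 1) + a₂ * (ψ (i + 2) n - ψ i n) := by
    rw [ha₁, ha₂]; field_simp at h3 ⊢; linear_combination h3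
  linear_combination (1 / 12) * H1 + (5 / 6) * H2 + (1 / 12) * H3 + a₁ * hu
end

section
/- Let ρ₁ > 0 be a real number and let m ≥ 2 be an integer. Let A₁ be the symmetric m×m real matrix with (A₁)₁₁ = (A₁)ₘₘ = (11/12)ρ₁, with all other diagonal entries equal to (5/6)ρ₁, with entries equal to ρ₁/12 whenever the row and column indices differ by exactly 1, and with all remaining entries equal to 0. Then A₁ is positive definite; in particular A₁ is invertible. -/
/-!
`A₁` is symmetric and strictly diagonally dominant: every diagonal entry is at least `5ρ₁/6`,
while each row has at most two nonzero off-diagonal entries, both equal to `ρ₁/12`. By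
Gershgorin's circle theorem every (real) eigenvalue of `A₁` then lies within `ρ₁/6` of a
diagonal entry, hence is positive, so `A₁` is positive definite.
-/

open Finset
open scoped ComplexOrder

namespace Matrix

variable {𝕜 n : Type*} [RCLike 𝕜] [Fintype n] [DecidableEq n] {A : Matrix n n 𝕜}

theorem IsHermitian.hasEigenvalue_eigenvalues (hA : A.IsHermitian) (i : n) :
    Module.End.HasEigenvalue (toLin' A) (hA.eigenvalues i : 𝕜) := by
  refine Module.End.hasEigenvalue_of_hasEigenvector (x := ⇑(hA.eigenvectorBasis i)) ⟨?_, ?_⟩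
  · rw [Module.End.mem_eigenspace_iff, toLin'_apply, hA.mulVec_eigenvectorBasis,
      RCLike.real_smul_eq_coe_smul (K := 𝕜)]
  · exact (WithLp.ofLp_eq_zero 2).ne.2 <| hA.eigenvectorBasis.orthonormal.ne_zero i

theorem IsHermitian.posDef_of_sum_row_lt_diag (hA : A.IsHermitian)
    (h : ∀ k, ∑ j ∈ univ.erase k, ‖A k j‖ < RCLike.re (A k k)) : A.PosDef := by
  refine hA.posDef_iff_eigenvalues_pos.2 fun i => ?_
  obtain ⟨k, hk⟩ := eigenvalue_mem_ball (hA.hasEigenvalue_eigenvalues i)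
  rw [Metric.mem_closedBall, dist_comm, dist_eq_norm] at hk
  have hre : RCLike.re (A k k) - hA.eigenvalues i ≤ ‖A k k - (hA.eigenvalues i : 𝕜)‖ := by
    simpa using RCLike.re_le_norm (A k k - (hA.eigenvalues i : 𝕜))
  linarith [h k]

end Matrix

namespace Fin

theorem card_filter_val_eq_le_one (m a : ℕ) : #{j : Fin m | (j : ℕ) = a} ≤ 1 :=
  card_le_one.2 fun j hj k hk => Fin.ext <| by simp only [mem_filter] at hj hk; omega

theorem sum_ite_adjacent_le {M : Type*} [AddCommMonoid M] [PartialOrder M] [IsOrderedAddMonoid M]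
    {m : ℕ} (i : Fin m) {c : M} (hc : 0 ≤ c) :
    ∑ j : Fin m, (if (i : ℕ) + 1 = j ∨ (j : ℕ) + 1 = i then c else 0) ≤ 2 • c := by
  have hcard : #{j : Fin m | (i : ℕ) + 1 = j ∨ (j : ℕ) + 1 = i} ≤ 2 :=
    calc #{j : Fin m | (i : ℕ) + 1 = j ∨ (j : ℕ) + 1 = i}
        ≤ #(({j | (j : ℕ) = i + 1} : Finset (Fin m)) ∪
              ({j | (j : ℕ) = i - 1} : Finset (Fin m))) :=
          card_le_card fun j hj => by
            simp only [mem_filter, mem_union, mem_univ, true_and] at hj ⊢; omega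
      _ ≤ 1 + 1 := (card_union_le _ _).trans
          (add_le_add (card_filter_val_eq_le_one _ _) (card_filter_val_eq_le_one _ _))
  rw [← sum_filter, Finset.sum_const]
  exact nsmul_le_nsmul_left hc hcard

end Fin

theorem A1_posDef_and_invertible_general (ρ₁ : ℝ) (hρ₁ : 0 < ρ₁) (m : ℕ)
    (A : Matrix (Fin m) (Fin m) ℝ)
    (hA : ∀ i j : Fin m,
      A i j =
        if i = j then
          (if (i : ℕ) = 0 ∨ (i : ℕ) = m - 1 then (11 / 12) * ρ₁ else (5 / 6) * ρ₁)
        else if (i : ℕ) + 1 = (j : ℕ) ∨ (j : ℕ) + 1 = (i : ℕ) then ρ₁ / 12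
        else 0) :
    A.PosDef ∧ IsUnit A := by
  have hsymm : A.IsHermitian :=
    Matrix.isHermitian_iff_isSymm.2 <| Matrix.IsSymm.ext fun i j => by
      by_cases hij : i = j
      · rw [hij]
      · rw [hA, hA, if_neg (Ne.symm hij), if_neg hij]
        simp only [or_comm]
  have hdiag (k : Fin m) : 5 / 6 * ρ₁ ≤ A k k := by
    rw [hA, if_pos rfl]
    split_ifs <;> linarith
  have hoff (k : Fin m) : ∑ j ∈ univ.erase k, ‖A k j‖ ≤ 2 • (ρ₁ / 12) :=
    calc ∑ j ∈ univ.erase k, ‖A k j‖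
        = ∑ j ∈ univ.erase k, if (k : ℕ) + 1 = j ∨ (j : ℕ) + 1 = k then ρ₁ / 12 else 0 :=
          sum_congr rfl fun j hj => by
            rw [hA, if_neg (ne_of_mem_erase hj).symm]
            split_ifs <;> simp [abs_of_pos hρ₁]
      _ ≤ ∑ j : Fin m, if (k : ℕ) + 1 = j ∨ (j : ℕ) + 1 = k then ρ₁ / 12 else 0 :=
          sum_le_univ_sum_of_nonneg fun _ => by positivity
      _ ≤ 2 • (ρ₁ / 12) := Fin.sum_ite_adjacent_le k (by positivity)
  have hpd : A.PosDef := hsymm.posDef_of_sum_row_lt_diag fun k => by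
    rw [RCLike.re_to_real]
    linarith [hoff k, hdiag k, two_nsmul (ρ₁ / 12)]
  exact ⟨hpd, hpd.isUnit⟩

/-- The almost-tridiagonal matrix `A₁` (corner diagonal entries `(11/12)ρ₁`, interior
diagonal entries `(5/6)ρ₁`, first sub- and super-diagonal entries `ρ₁/12`) is positive
definite; in particular it is invertible. -/
theorem A1_posDef_and_invertible (ρ₁ : ℝ) (hρ₁ : 0 < ρ₁) (m : ℕ) (hm : 2 ≤ m)
    (A : Matrix (Fin m) (Fin m) ℝ)
    (hA : ∀ i j : Fin m,
      A i j =
        if i = j then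
          (if (i : ℕ) = 0 ∨ (i : ℕ) = m - 1 then (11 / 12) * ρ₁ else (5 / 6) * ρ₁)
        else if (i : ℕ) + 1 = (j : ℕ) ∨ (j : ℕ) + 1 = (i : ℕ) then ρ₁ / 12
        else 0) :
    A.PosDef ∧ IsUnit A :=
  A1_posDef_and_invertible_general ρ₁ hρ₁ m A hA
end

section
/- Let m ≥ 2 be an integer and let ρ₁, ρ₂, ρ₃, τ, κ, h, δ > 0 be real numbers. Set b₃ = κ/2, τ₁ = ρ₃/(2κ), τ₃ = δ/(4κh), r₁ = τ/(2κ). Let A₁ be the symmetric m×m matrix with corner diagonal entries (11/12)ρ₁, interior diagonal entries (5/6)ρ₁, and off-diagonal entries ρ₁/12 on the first sub- and super-diagonals; let A₂ be the tridiagonal m×m matrix with diagonal entries (5/6)(ρ₂+b₃) and sub- and super-diagonal entries (ρ₂+b₃)/12; let A₃ = τ₁·Id and A₄ = r₁·Id, where Id is the m×m identity matrix; and let L₃ be the tridiagonal m×m matrix with zero diagonal, super-diagonal entries τ₃ and sub-diagonal entries −τ₃. Then for all vectors v₁, v₂, v₃, v₄ ∈ ℝᵐ there exist unique vectors Φ,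 Ψ, Θ, Q ∈ ℝᵐ such that A₁Φ = v₁, A₂Ψ = v₂, A₃Θ + L₃Ψ = v₃, and A₄Q = v₄. In particular, each time step of the discrete scheme A₁Φⁿ⁺¹ = B₁Φⁿ + C₁Ψⁿ + D₁Φⁿ⁻¹, A₂Ψⁿ⁺¹ = B₂Ψⁿ + C₂Φⁿ + D₂Ψⁿ⁻¹ + F₂Θⁿ, A₃Θⁿ⁺¹ + L₃Ψⁿ⁺¹ = B₃Θⁿ⁻¹ − C₃Qⁿ + D₃Ψⁿ⁻¹, A₄Qⁿ⁺¹ = B₄Qⁿ⁻¹ − C₄Qⁿ − D₄Θⁿ determines (Φⁿ⁺¹, Ψⁿ⁺¹, Θⁿ⁺¹, Qⁿ⁺¹) uniquely from the data at the two previous time levels. -/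
open Finset

/-- Sum of an indicator with at-most-one satisfier is bounded by the value. -/
lemma sum_ite_le_aux {n : Type*} [Fintype n] (p : n → Prop) [DecidablePred p]
    (c : ℝ) (hc : 0 ≤ c) (hp : ∀ a b, p a → p b → a = b) :
    ∑ j : n, (if p j then c else 0) ≤ c := by
  rw [Finset.sum_ite, Finset.sum_const, Finset.sum_const_zero, add_zero]
  have hcard : (Finset.univ.filter p).card ≤ 1 :=
    Finset.card_le_one.mpr (by intro a ha b hb; exact hp a b (by simpa using ha) (by simpa using hb))
  calc (Finset.univ.filter p).card • c = ((Finset.univ.filter p).card : ℝ) * c := by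
        simp [nsmul_eq_mul]
    _ ≤ 1 * c := by
        apply mul_le_mul_of_nonneg_right _ hc
        exact_mod_cast hcard
    _ = c := one_mul c

/-- A strictly (row) diagonally dominant real matrix has injective `mulVec`. -/
lemma sdd_injective {m : ℕ} (A : Matrix (Fin m) (Fin m) ℝ)
    (hdom : ∀ i, ∑ j ∈ Finset.univ.erase i, |A i j| < |A i i|) :
    Function.Injective A.mulVec := by
  intro x y hxy
  by_contra hne
  set z : Fin m → ℝ := x - y with hz
  have hz0 : A.mulVec z = 0 := by
    rw [hz, Matrix.mulVec_sub, hxy, sub_self]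
  have hzne : z ≠ 0 := sub_ne_zero.mpr hne
  obtain ⟨i, -, hi⟩ := Finset.exists_max_image Finset.univ (fun j => |z j|)
    (Finset.univ_nonempty_iff.mpr ⟨Classical.choice (by
      by_contra hemp
      exact hzne (funext fun j => absurd ⟨j⟩ hemp))⟩)
  have hzi : 0 < |z i| := by
    rcases Function.ne_iff.mp hzne with ⟨k, hk⟩
    exact lt_of_lt_of_le (abs_pos.mpr hk) (hi k (Finset.mem_univ k))
  have hrow : (A.mulVec z) i = 0 := congrFun hz0 i
  have hsum : A i i * z i = -∑ j ∈ Finset.univ.erase i, A i j * z j := by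
    have := hrow
    rw [Matrix.mulVec, dotProduct] at this
    rw [← Finset.add_sum_erase _ _ (Finset.mem_univ i)] at this
    linarith
  have hb : |A i i| * |z i| ≤ (∑ j ∈ Finset.univ.erase i, |A i j|) * |z i| := by
    calc |A i i| * |z i| = |A i i * z i| := (abs_mul _ _).symm
      _ = |∑ j ∈ Finset.univ.erase i, A i j * z j| := by rw [hsum, abs_neg]
      _ ≤ ∑ j ∈ Finset.univ.erase i, |A i j * z j| := Finset.abs_sum_le_sum_abs _ _
      _ ≤ ∑ j ∈ Finset.univ.erase i, |A i j| * |z i| := by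
          apply Finset.sum_le_sum
          intro j _
          rw [abs_mul]
          exact mul_le_mul_of_nonneg_left (hi j (Finset.mem_univ j)) (abs_nonneg _)
      _ = (∑ j ∈ Finset.univ.erase i, |A i j|) * |z i| := (Finset.sum_mul _ _ _).symm
  have := mul_lt_mul_of_pos_right (hdom i) hzi
  linarith

/-- Off-diagonal row sums of a tridiagonal-type matrix are bounded by `2c`. -/
lemma tri_row_sum_le {m : ℕ} (B : Matrix (Fin m) (Fin m) ℝ) (i : Fin m) (c : ℝ) (hc : 0 ≤ c)
    (hoff : ∀ j : Fin m, j ≠ i →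
      |B i j| ≤ (if (i : ℕ) + 1 = (j : ℕ) then c else 0) +
        (if (j : ℕ) + 1 = (i : ℕ) then c else 0)) :
    ∑ j ∈ Finset.univ.erase i, |B i j| ≤ 2 * c := by
  have h1 : ∑ j ∈ Finset.univ.erase i, |B i j| ≤
      ∑ j ∈ Finset.univ.erase i, ((if (i : ℕ) + 1 = (j : ℕ) then c else 0) +
        (if (j : ℕ) + 1 = (i : ℕ) then c else 0)) :=
    Finset.sum_le_sum (fun j hj => hoff j (Finset.ne_of_mem_erase hj))
  have h2 : ∑ j ∈ Finset.univ.erase i, ((if (i : ℕ) + 1 = (j : ℕ) then c else 0) +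
        (if (j : ℕ) + 1 = (i : ℕ) then c else 0)) ≤
      ∑ j : Fin m, ((if (i : ℕ) + 1 = (j : ℕ) then c else 0) +
        (if (j : ℕ) + 1 = (i : ℕ) then c else 0)) := by
    apply Finset.sum_le_sum_of_subset_of_nonneg (Finset.erase_subset _ _)
    intro j _ _
    have : (0:ℝ) ≤ if (i : ℕ) + 1 = (j : ℕ) then c else 0 := by positivity
    have : (0:ℝ) ≤ if (j : ℕ) + 1 = (i : ℕ) then c else 0 := by positivity
    positivity
  have h3 : ∑ j : Fin m, ((if (i : ℕ) + 1 = (j : ℕ) then c else 0) +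
        (if (j : ℕ) + 1 = (i : ℕ) then c else 0)) ≤ c + c := by
    rw [Finset.sum_add_distrib]
    have ha := sum_ite_le_aux (fun j : Fin m => (i : ℕ) + 1 = (j : ℕ)) c hc
      (fun a b hA hB => Fin.ext (by omega))
    have hb := sum_ite_le_aux (fun j : Fin m => (j : ℕ) + 1 = (i : ℕ)) c hc
      (fun a b hA hB => Fin.ext (by omega))
    linarith
  linarith

/-- Each time step of the fourth-order compact finite-difference scheme for the
Timoshenko system with second sound is uniquely solvable: for any right-hand sides
`v₁, v₂, v₃, v₄` there exist unique vectors `Φ, Ψ, Θ, Q` with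
`A₁Φ = v₁`, `A₂Ψ = v₂`, `A₃Θ + L₃Ψ = v₃` and `A₄Q = v₄`. -/
theorem timoshenko_scheme_unique_solvability
    (m : ℕ) (hm : 2 ≤ m)
    (ρ₁ ρ₂ ρ₃ τ κ h δ : ℝ)
    (hρ₁ : 0 < ρ₁) (hρ₂ : 0 < ρ₂) (hρ₃ : 0 < ρ₃) (hτ : 0 < τ)
    (hκ : 0 < κ) (hh : 0 < h) (hδ : 0 < δ)
    (b₃ τ₁ τ₃ r₁ : ℝ)
    (hb₃ : b₃ = κ / 2) (hτ₁ : τ₁ = ρ₃ / (2 * κ))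
    (hτ₃ : τ₃ = δ / (4 * κ * h)) (hr₁ : r₁ = τ / (2 * κ))
    (A₁ A₂ A₃ A₄ L₃ : Matrix (Fin m) (Fin m) ℝ)
    (hA₁ : ∀ i j : Fin m,
      A₁ i j =
        if i = j then
          (if (i : ℕ) = 0 ∨ (i : ℕ) = m - 1 then (11 / 12) * ρ₁ else (5 / 6) * ρ₁)
        else if (i : ℕ) + 1 = (j : ℕ) ∨ (j : ℕ) + 1 = (i : ℕ) then ρ₁ / 12
        else 0)
    (hA₂ : ∀ i j : Fin m,
      A₂ i j =
        if i = j then (5 / 6) * (ρ₂ + b₃)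
        else if (i : ℕ) + 1 = (j : ℕ) ∨ (j : ℕ) + 1 = (i : ℕ) then (ρ₂ + b₃) / 12
        else 0)
    (hA₃ : A₃ = τ₁ • (1 : Matrix (Fin m) (Fin m) ℝ))
    (hA₄ : A₄ = r₁ • (1 : Matrix (Fin m) (Fin m) ℝ))
    (hL₃ : ∀ i j : Fin m,
      L₃ i j =
        if (i : ℕ) + 1 = (j : ℕ) then τ₃
        else if (j : ℕ) + 1 = (i : ℕ) then -τ₃
        else 0) :
    ∀ v₁ v₂ v₃ v₄ : Fin m → ℝ,
      ∃! x : (Fin m → ℝ) × (Fin m → ℝ) × (Fin m → ℝ) × (Fin m → ℝ),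
        A₁.mulVec x.1 = v₁ ∧
        A₂.mulVec x.2.1 = v₂ ∧
        A₃.mulVec x.2.2.1 + L₃.mulVec x.2.1 = v₃ ∧
        A₄.mulVec x.2.2.2 = v₄ := by
  intro v₁ v₂ v₃ v₄
  have hτ₁pos : 0 < τ₁ := by rw [hτ₁]; positivity
  have hr₁pos : 0 < r₁ := by rw [hr₁]; positivity
  have hc₂ : 0 < ρ₂ + b₃ := by rw [hb₃]; positivity
  -- strict diagonal dominance of A₁
  have hdom₁ : ∀ i, ∑ j ∈ Finset.univ.erase i, |A₁ i j| < |A₁ i i| := by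
    intro i
    have hrow : ∑ j ∈ Finset.univ.erase i, |A₁ i j| ≤ 2 * (ρ₁ / 12) := by
      apply tri_row_sum_le _ _ _ (by positivity)
      intro j hj
      rw [hA₁]
      rw [if_neg (Ne.symm hj)]
      rcases eq_or_ne ((i : ℕ) + 1) (j : ℕ) with h1 | h1 <;>
        rcases eq_or_ne ((j : ℕ) + 1) (i : ℕ)  with h2 | h2 <;>
        simp [h1, h2, abs_of_nonneg (by positivity : (0:ℝ) ≤ ρ₁ / 12)] <;> positivity
    have hdiag : (5 / 6) * ρ₁ ≤ |A₁ i i| := by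
      rw [hA₁, if_pos rfl]
      rcases em ((i : ℕ) = 0 ∨ (i : ℕ) = m - 1) with hc | hc <;>
        simp only [if_pos, if_neg, hc, ite_true, ite_false] <;>
        rw [abs_of_nonneg (by positivity)] <;> nlinarith
    nlinarith
  have hdom₂ : ∀ i, ∑ j ∈ Finset.univ.erase i, |A₂ i j| < |A₂ i i| := by
    intro i
    have hrow : ∑ j ∈ Finset.univ.erase i, |A₂ i j| ≤ 2 * ((ρ₂ + b₃) / 12) := by
      apply tri_row_sum_le _ _ _ (by positivity)
      intro j hj
      rw [hA₂]
      rw [if_neg (Ne.symm hj)]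
      rcases eq_or_ne ((i : ℕ) + 1) (j : ℕ) with h1 | h1 <;>
        rcases eq_or_ne ((j : ℕ) + 1) (i : ℕ)  with h2 | h2 <;>
        simp [h1, h2, abs_of_nonneg (by positivity : (0:ℝ) ≤ (ρ₂ + b₃) / 12)] <;> positivity
    have hdiag : |A₂ i i| = (5 / 6) * (ρ₂ + b₃) := by
      rw [hA₂, if_pos rfl, abs_of_nonneg (by positivity)]
    rw [hdiag]; nlinarith
  have hinj₁ : Function.Injective A₁.mulVec := sdd_injective A₁ hdom₁
  have hinj₂ : Function.Injective A₂.mulVec := sdd_injective A₂ hdom₂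
  have hsurj₁ : Function.Surjective A₁.mulVec :=
    Matrix.mulVec_surjective_iff_isUnit.mpr (Matrix.mulVec_injective_iff_isUnit.mp hinj₁)
  have hsurj₂ : Function.Surjective A₂.mulVec :=
    Matrix.mulVec_surjective_iff_isUnit.mpr (Matrix.mulVec_injective_iff_isUnit.mp hinj₂)
  obtain ⟨Φ, hΦ⟩ := hsurj₁ v₁
  obtain ⟨Ψ, hΨ⟩ := hsurj₂ v₂
  have hA₃mul : ∀ w : Fin m → ℝ, A₃.mulVec w = τ₁ • w := by
    intro w; rw [hA₃, Matrix.smul_mulVec, Matrix.one_mulVec]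
  have hA₄mul : ∀ w : Fin m → ℝ, A₄.mulVec w = r₁ • w := by
    intro w; rw [hA₄, Matrix.smul_mulVec, Matrix.one_mulVec]
  refine ⟨⟨Φ, Ψ, τ₁⁻¹ • (v₃ - L₃.mulVec Ψ), r₁⁻¹ • v₄⟩, ⟨hΦ, hΨ, ?_, ?_⟩, ?_⟩
  · rw [hA₃mul, smul_smul, mul_inv_cancel₀ hτ₁pos.ne', one_smul]
    abel
  · rw [hA₄mul, smul_smul, mul_inv_cancel₀ hr₁pos.ne', one_smul]
  · rintro ⟨Φ', Ψ', Θ', Q'⟩ ⟨h1, h2, h3, h4⟩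
    have e1 : Φ' = Φ := hinj₁ (by rw [h1, hΦ])
    have e2 : Ψ' = Ψ := hinj₂ (by rw [h2, hΨ])
    have e3 : Θ' = τ₁⁻¹ • (v₃ - L₃.mulVec Ψ) := by
      rw [hA₃mul] at h3
      simp only at h3
      have hh3 : τ₁ • Θ' = v₃ - L₃.mulVec Ψ := by
        rw [← e2]; exact eq_sub_of_add_eq h3
      rw [← hh3, smul_smul, inv_mul_cancel₀ hτ₁pos.ne', one_smul]
    have e4 : Q' = r₁⁻¹ • v₄ := by
      rw [hA₄mul] at h4
      rw [← h4, smul_smul, inv_mul_cancel₀ hr₁pos.ne', one_smul]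
    simp [e1, e2, e3, e4]
end
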